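/- The localized nonlocal perimeter is lower semicontinuous under L¹_loc convergence: if E_k → E in L¹_loc(ℝⁿ) then Per(E, U) ≤ liminf_k Per(E_k, U) for every open U ⊆ ℝⁿ. -/

import Mathlib

/-!
Pass to a subsequence along which `Per(E_k, U)` tends to the liminf. Exhausting `ℝⁿ` by compact
sets and using Borel–Cantelli, a further subsequence has the property that almost every point
eventually lies in `E_k` exactly when it lies in `E`. Writing `Per(·, U)` as one integral against
the measure `½ 𝟙_{U×U} + 𝟙_{U×Uᶜ}` on `ℝⁿ × ℝⁿ`, the integrand for `E_k` is then eventually equal to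
the one for `E` almost everywhere, and Fatou's lemma gives the inequality.
-/

open MeasureTheory Filter
open scoped ENNReal

/-- `(χ_E(x) - χ_E(y))²` as an extended nonnegative real. -/
noncomputable def jumpWeight {n : ℕ} (E : Set (EuclideanSpace ℝ (Fin n)))
    (x y : EuclideanSpace ℝ (Fin n)) : ℝ≥0∞ :=
  ENNReal.ofReal ((E.indicator (fun _ => (1 : ℝ)) x
    - E.indicator (fun _ => (1 : ℝ)) y) ^ 2)

/-- The localized nonlocal perimeter in symmetric form:
`Per(E,U) = ½∫_{U×U} (χ_E(x)−χ_E(y))² K(x−y) + ∫_{U×Uᶜ} (χ_E(x)−χ_E(y))² K(x−y)`. -/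
noncomputable def nonlocalPerLoc {n : ℕ} (K : EuclideanSpace ℝ (Fin n) → ℝ≥0∞)
    (E U : Set (EuclideanSpace ℝ (Fin n))) : ℝ≥0∞ :=
  (1 / 2) * (∫⁻ p in U ×ˢ U, jumpWeight E p.1 p.2 * K (p.1 - p.2) ∂volume) +
  ∫⁻ p in U ×ˢ Uᶜ, jumpWeight E p.1 p.2 * K (p.1 - p.2) ∂volume

theorem exists_strictMono_ae_eventually_notMem {X : Type*} [TopologicalSpace X]
    [SigmaCompactSpace X] [MeasurableSpace X] {μ : Measure X} {s : ℕ → Set X}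
    (hs : ∀ A, IsCompact A → Tendsto (fun k => μ (s k ∩ A)) atTop (nhds 0)) :
    ∃ φ : ℕ → ℕ, StrictMono φ ∧ ∀ᵐ x ∂μ, ∀ᶠ m in atTop, x ∉ s (φ m) := by
  have hsmall : ∀ m, ∀ᶠ k in atTop, μ (s k ∩ compactCovering X m) ≤ (2⁻¹ : ℝ≥0∞) ^ m := fun m =>
    (hs _ (isCompact_compactCovering X m)).eventually_le_const (ENNReal.pow_pos (by simp) m)
  obtain ⟨φ, hφ, hφsmall⟩ := extraction_forall_of_eventually hsmall
  have hsum : ∑' m, μ (s (φ m) ∩ compactCovering X m) ≠ ⊤ :=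
    ne_top_of_le_ne_top (ENNReal.tsum_geometric_two.trans_ne ENNReal.ofNat_ne_top)
      (ENNReal.tsum_le_tsum hφsmall)
  refine ⟨φ, hφ, ?_⟩
  filter_upwards [ae_eventually_notMem hsum] with x hx
  obtain ⟨N, hN⟩ := exists_mem_compactCovering x
  filter_upwards [hx, eventually_ge_atTop N] with m hxm hm hxs
  exact hxm ⟨hxs, compactCovering_subset X hm hN⟩

theorem lintegral_le_liminf_of_ae_eventually_eq {α : Type*} [MeasurableSpace α] {μ : Measure α}
    {f : α → ℝ≥0∞} {g : ℕ → α → ℝ≥0∞} (hg : ∀ m, AEMeasurable (g m) μ)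
    (h : ∀ᵐ x ∂μ, ∀ᶠ m in atTop, g m x = f x) :
    ∫⁻ x, f x ∂μ ≤ atTop.liminf fun m => ∫⁻ x, g m x ∂μ :=
  calc ∫⁻ x, f x ∂μ = ∫⁻ x, atTop.liminf (fun m => g m x) ∂μ :=
        lintegral_congr_ae (h.mono fun _ hx => ((liminf_congr hx).trans (liminf_const _)).symm)
    _ ≤ _ := lintegral_liminf_le' hg

section Perimeter

variable {n : ℕ}

local notation "ℝⁿ" => EuclideanSpace ℝ (Fin n)

theorem measurable_jumpWeight {E : Set ℝⁿ} (hE : MeasurableSet E) :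
    Measurable fun p : ℝⁿ × ℝⁿ => jumpWeight E p.1 p.2 := by
  have hχ : Measurable (E.indicator fun _ => (1 : ℝ)) := measurable_const.indicator hE
  exact (((hχ.comp measurable_fst).sub (hχ.comp measurable_snd)).pow_const 2).ennreal_ofReal

theorem jumpWeight_congr {E F : Set ℝⁿ} {x y : ℝⁿ} (hx : x ∉ symmDiff F E)
    (hy : y ∉ symmDiff F E) : jumpWeight F x y = jumpWeight E x y := by
  have hx' : x ∈ F ↔ x ∈ E := by rw [Set.mem_symmDiff] at hx; tauto
  have hy' : y ∈ F ↔ y ∈ E := by rw [Set.mem_symmDiff] at hy; tauto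
  rw [jumpWeight, jumpWeight, Set.indicator_const_eq_indicator_const hx',
    Set.indicator_const_eq_indicator_const hy']

noncomputable def perimeterMeasure (U : Set ℝⁿ) : Measure (ℝⁿ × ℝⁿ) :=
  (1 / 2 : ℝ≥0∞) • volume.restrict (U ×ˢ U) + volume.restrict (U ×ˢ Uᶜ)

theorem perimeterMeasure_absolutelyContinuous (U : Set ℝⁿ) : perimeterMeasure U ≪ volume :=
  ((Measure.absolutelyContinuous_of_le Measure.restrict_le_self).smul_left _).add_left
    (Measure.absolutelyContinuous_of_le Measure.restrict_le_self)

theorem nonlocalPerLoc_eq_lintegral (K : ℝⁿ → ℝ≥0∞) (E U : Set ℝⁿ) :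
    nonlocalPerLoc K E U =
      ∫⁻ p, jumpWeight E p.1 p.2 * K (p.1 - p.2) ∂perimeterMeasure U := by
  rw [perimeterMeasure, lintegral_add_measure, lintegral_smul_measure, smul_eq_mul, nonlocalPerLoc]

theorem nonlocalPerLoc_le_liminf_of_ae_eventually_notMem {K : ℝⁿ → ℝ≥0∞} (hK : Measurable K)
    {E : Set ℝⁿ} {F : ℕ → Set ℝⁿ} (hF : ∀ m, MeasurableSet (F m))
    (hae : ∀ᵐ x, ∀ᶠ m in atTop, x ∉ symmDiff (F m) E) (U : Set ℝⁿ) :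
    nonlocalPerLoc K E U ≤ atTop.liminf fun m => nonlocalPerLoc K (F m) U := by
  have hae₂ : ∀ᵐ p : ℝⁿ × ℝⁿ, ∀ᶠ m in atTop, p.1 ∉ symmDiff (F m) E ∧ p.2 ∉ symmDiff (F m) E := by
    rw [Measure.volume_eq_prod]
    filter_upwards [Measure.quasiMeasurePreserving_fst.ae hae,
      Measure.quasiMeasurePreserving_snd.ae hae] with p h₁ h₂ using h₁.and h₂
  simp only [nonlocalPerLoc_eq_lintegral]
  refine lintegral_le_liminf_of_ae_eventually_eq
    (fun m => ((measurable_jumpWeight (hF m)).mul (hK.comp measurable_sub)).aemeasurable) ?_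
  filter_upwards [perimeterMeasure_absolutelyContinuous U |>.ae_le hae₂] with p hp
  filter_upwards [hp] with m hm
  rw [jumpWeight_congr hm.1 hm.2]

end Perimeter

theorem nonlocalPerLoc_lsc_general {n : ℕ}
    (K : EuclideanSpace ℝ (Fin n) → ℝ≥0∞) (hKmeas : Measurable K)
    (E : Set (EuclideanSpace ℝ (Fin n)))
    (Ek : ℕ → Set (EuclideanSpace ℝ (Fin n))) (hEk : ∀ k, MeasurableSet (Ek k))
    (hconv : ∀ A : Set (EuclideanSpace ℝ (Fin n)), IsCompact A →
      Tendsto (fun k => volume (symmDiff (Ek k) E ∩ A)) atTop (nhds 0))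
    (U : Set (EuclideanSpace ℝ (Fin n))) :
    nonlocalPerLoc K E U ≤ atTop.liminf fun k => nonlocalPerLoc K (Ek k) U := by
  obtain ⟨ψ, hψliminf, hψ⟩ :=
    exists_seq_tendsto_liminf (f := atTop) (u := fun k => nonlocalPerLoc K (Ek k) U)
  obtain ⟨φ, hφ, hae⟩ := exists_strictMono_ae_eventually_notMem
    (s := fun m => symmDiff (Ek (ψ m)) E) fun A hA => (hconv A hA).comp hψ
  calc nonlocalPerLoc K E U
      ≤ atTop.liminf (fun m => nonlocalPerLoc K (Ek (ψ (φ m))) U) :=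
        nonlocalPerLoc_le_liminf_of_ae_eventually_notMem hKmeas (fun m => hEk _) hae U
    _ = atTop.liminf fun k => nonlocalPerLoc K (Ek k) U :=
        (hψliminf.comp hφ.tendsto_atTop).liminf_eq

/-- Lower semicontinuity of the localized nonlocal perimeter with respect to
`L¹_loc` convergence of sets. -/
theorem nonlocalPerLoc_lsc {n : ℕ}
    (K : EuclideanSpace ℝ (Fin n) → ℝ≥0∞) (hKmeas : Measurable K)
    (hKsymm : ∀ h, K (-h) = K h)
    (E : Set (EuclideanSpace ℝ (Fin n))) (hE : MeasurableSet E)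
    (Ek : ℕ → Set (EuclideanSpace ℝ (Fin n))) (hEk : ∀ k, MeasurableSet (Ek k))
    (hconv : ∀ A : Set (EuclideanSpace ℝ (Fin n)), IsCompact A →
      Tendsto (fun k => volume (symmDiff (Ek k) E ∩ A)) atTop (nhds 0))
    (U : Set (EuclideanSpace ℝ (Fin n))) (hU : IsOpen U) :
    nonlocalPerLoc K E U ≤ atTop.liminf fun k => nonlocalPerLoc K (Ek k) U :=
  nonlocalPerLoc_lsc_general K hKmeas E Ek hEk hconv U
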